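/- Let α ∈ 𝕋 be non-periodic under the doubling map and let D ⊆ 𝕋 be a gluing link with n arcs such that α ∉ D. Then h⁻¹(D) is the disjoint union of L̃(D) and R̃(D), and each of L̃(D) and R̃(D) is a gluing link with n arcs whose Haar measure equals |D|/2. -/
import Mathlib


open Set MeasureTheory Filter
open scoped Classical

noncomputable section

/-- The circle `ℝ/ℤ`. -/
abbrev 𝕋 := AddCircle (1 : ℝ)

/-- The doubling map `h(x) = 2x` on the circle. -/
def dbl (x : 𝕋) : 𝕋 := x + x

/-- The representative of a point of the circle lying in `[0,1)`. -/
def rep (x : 𝕋) : ℝ := (AddCircle.equivIco 1 0 x : ℝ)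

/-- `⋆₁ = α/2`. -/
def star1 (α : 𝕋) : 𝕋 := ((rep α / 2 : ℝ) : 𝕋)

/-- `⋆₂ = α/2 + 1/2`. -/
def star2 (α : 𝕋) : 𝕋 := ((rep α / 2 + 1 / 2 : ℝ) : 𝕋)

/-- The closed semicircle `C(L) = {α/2 + t : t ∈ [0,1/2]}`. -/
def arcL (α : 𝕋) : Set 𝕋 := (fun t : ℝ => ((rep α / 2 + t : ℝ) : 𝕋)) '' Set.Icc 0 (1 / 2)

/-- The closed semicircle `C(R) = {α/2 + 1/2 + t : t ∈ [0,1/2]}`. -/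
def arcR (α : 𝕋) : Set 𝕋 :=
  (fun t : ℝ => ((rep α / 2 + 1 / 2 + t : ℝ) : 𝕋)) '' Set.Icc 0 (1 / 2)

/-- The open semicircle `{α/2 + t : t ∈ (0,1/2)}`. -/
def openArcL (α : 𝕋) : Set 𝕋 := (fun t : ℝ => ((rep α / 2 + t : ℝ) : 𝕋)) '' Set.Ioo 0 (1 / 2)

/-- The open semicircle `{α/2 + 1/2 + t : t ∈ (0,1/2)}`. -/
def openArcR (α : 𝕋) : Set 𝕋 :=
  (fun t : ℝ => ((rep α / 2 + 1 / 2 + t : ℝ) : 𝕋)) '' Set.Ioo 0 (1 / 2)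

/-- The alphabet `{L, R, ⋆}`. -/
inductive Letter | L | R | star
deriving DecidableEq

/-- `itin α x n` is the `(n+1)`-st letter of the itinerary `I^α(x)`. -/
def itin (α x : 𝕋) (n : ℕ) : Letter :=
  if dbl^[n] x = star1 α ∨ dbl^[n] x = star2 α then Letter.star
  else if dbl^[n] x ∈ openArcL α then Letter.L else Letter.R

/-- The lamination `x ≈_α y`. -/
def approx (α : 𝕋) (x y : 𝕋) : Prop :=
  ∀ n : ℕ, itin α x n = itin α y n ∨ itin α x n = Letter.star ∨ itin α y n = Letter.star

/-- A point is periodic under the doubling map. -/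
def IsPeriodicPt' (x : 𝕋) : Prop := ∃ k : ℕ, 1 ≤ k ∧ dbl^[k] x = x

/-- `α` is periodic under the doubling map. -/
def Periodic' (α : 𝕋) : Prop := IsPeriodicPt' α

/-- `α` is pre-periodic under the doubling map. -/
def PrePeriodic (α : 𝕋) : Prop := ∃ m : ℕ, IsPeriodicPt' (dbl^[m] α)

/-- `D` is a gluing link with `n` arcs with respect to `≈_α`: a disjoint union of `n` closed
arcs whose `2n` endpoints occur in counterclockwise cyclic order and are consecutively glued
by `≈_α`. -/
def IsGluingLink (α : 𝕋) (n : ℕ) (D : Set 𝕋) : Prop :=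
  0 < n ∧ ∃ s e : ℕ → ℝ,
    (∀ i < n, s i ≤ e i) ∧
    (∀ i j : ℕ, i < j → j < n → e i < s j) ∧
    (∀ i < n, ∀ j < n, e j < s i + 1) ∧
    D = ⋃ i ∈ Finset.range n, (fun t : ℝ => (t : 𝕋)) '' Set.Icc (s i) (e i) ∧
    (∀ i < n, approx α ((e i : ℝ) : 𝕋) ((s ((i + 1) % n) : ℝ) : 𝕋))

/-- `L̃(x)`: the `h`-preimage of `x` in the interior of `C(L)` (for `x ≠ α`). -/
def tldL (α x : 𝕋) : 𝕋 :=
  if ((rep x / 2 : ℝ) : 𝕋) ∈ openArcL α then ((rep x / 2 : ℝ) : 𝕋)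
  else ((rep x / 2 + 1 / 2 : ℝ) : 𝕋)

/-- `R̃(x)`: the `h`-preimage of `x` in the interior of `C(R)` (for `x ≠ α`). -/
def tldR (α x : 𝕋) : 𝕋 :=
  if ((rep x / 2 : ℝ) : 𝕋) ∈ openArcR α then ((rep x / 2 : ℝ) : 𝕋)
  else ((rep x / 2 + 1 / 2 : ℝ) : 𝕋)

/-- The inverse branch associated with a single letter of `{L,R}`
(`true` codes `L`, `false` codes `R`). -/
def tldB (α : 𝕋) (b : Bool) (x : 𝕋) : 𝕋 := if b then tldL α x else tldR α x

/-- `g̃ = g̃[1] ∘ ⋯ ∘ g̃[n]` for a word `g ∈ {L,R}^*`. -/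
def wtld (α : 𝕋) (g : List Bool) (x : 𝕋) : 𝕋 := g.foldr (fun b y => tldB α b y) x

/-- The embedding `e(θ) = exp(2πiθ)` of the circle into `ℂ`. -/
def emb (x : 𝕋) : ℂ := Complex.exp (2 * Real.pi * Complex.I * (rep x))

/-- The chord of a pair of points of the circle: the closed Euclidean segment joining their
images in `ℂ`. -/
def chord (a b : 𝕋) : Set ℂ := segment ℝ (emb a) (emb b)

/-- The union of all chords `l_g` for words `g ∈ {L,R}^n`. -/
def chordsUnion (α : 𝕋) (n : ℕ) : Set ℂ :=
  ⋃ g ∈ {g : List Bool | g.length = n},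
    chord (wtld α g (star1 α)) (wtld α g (star2 α))

/-- The closed unit disk minus the chords of level `n`. -/
def diskMinus (α : 𝕋) (n : ℕ) : Set ℂ := Metric.closedBall (0 : ℂ) 1 \ chordsUnion α n

/-- `C` is a generalized cylinder set of degree `n`: the trace on the circle of the closure of
a connected component of the closed unit disk minus the chords of level `n`. -/
def IsGCS (α : 𝕋) (n : ℕ) (C : Set 𝕋) : Prop :=
  ∃ z ∈ diskMinus α n,
    C = {x : 𝕋 | emb x ∈ closure (connectedComponentIn (diskMinus α n) z)}

/-- The closed region of the circle associated with a letter (`⋆` imposes no restriction). -/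
def semi (α : 𝕋) : Letter → Set 𝕋
  | Letter.L => arcL α
  | Letter.R => arcR α
  | Letter.star => Set.univ

/-- `C(u)` for a word `u ∈ {L,R,⋆}^m`. -/
def cylSet (α : 𝕋) (u : List Letter) : Set 𝕋 :=
  {x : 𝕋 | ∀ i < u.length, dbl^[i] x ∈ semi α (u.getD i Letter.star)}

/-- The digit sequence of `I(α) = I^α(α)` (0-indexed: `ia α n` is the `(n+1)`-st digit). -/
def ia (α : 𝕋) (n : ℕ) : Letter := itin α α n

/-- A set `ℛ ⊆ ℕ` of indices is `D`-rare. -/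
def DRare (D : ℕ) (R : Finset ℕ) : Prop :=
  ∀ i : ℕ, (R.filter (fun j => i ≤ j ∧ j ≤ i + D)).card ≤ 3

/-- The `i`-th digit (1-based) of `I(α)[1..n]` is `(D,ℛ)`-duplicating. -/
def DupDigit (α : 𝕋) (D : ℕ) (R : Finset ℕ) (n i : ℕ) : Prop :=
  ∃ a b : ℕ, 1 ≤ a ∧ a ≤ i ∧ i ≤ b ∧ b ≤ n ∧
    (∀ j, a ≤ j → j ≤ b → j ∉ R → ia α (j - 1) = ia α (j - a)) ∧
    (b = n ∨ D < b - a + 1)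


/-- `α` is strongly recurrent. -/
def StronglyRecurrent (α : 𝕋) : Prop :=
  ∀ D : ℕ, 0 < D → ∀ τ : ℝ, τ < 1 →
    ∃ n : ℕ, D < n ∧ ∃ R : Finset ℕ, R ⊆ Finset.Icc 1 n ∧ DRare D R ∧
      τ * n < ((Finset.Icc 1 n).filter (fun i => DupDigit α D R n i)).card

/-- `α` is weakly pre-periodic with period `k`. -/
def WeaklyPrePeriodicWith (α : 𝕋) (k : ℕ) : Prop :=
  1 ≤ k ∧ ∃ m : ℕ, 1 ≤ m ∧ ∃ X : Letter, (X = Letter.L ∨ X = Letter.R) ∧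
    ∀ n : ℕ, ia α (m + k * n - 1) = X

/-- `α` is weakly pre-periodic (for some period). -/
def WeaklyPrePeriodic (α : 𝕋) : Prop := ∃ k : ℕ, WeaklyPrePeriodicWith α k

end
open AddCircle

lemma coe_rep (x : 𝕋) : ((rep x : ℝ) : 𝕋) = x := (equivIco 1 0).symm_apply_apply x

lemma rep_coe (u : ℝ) : rep ((u : ℝ) : 𝕋) = Int.fract u := by
  have := AddCircle.coe_equivIco_mk_apply (𝕜 := ℝ) (p := 1) u
  simpa [rep, div_one] using this

lemma rep_mem (x : 𝕋) : rep x ∈ Set.Ico (0:ℝ) 1 := by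
  have := (equivIco (1:ℝ) 0 x).2
  simpa [rep] using this

lemma coe_eq_coe {u v : ℝ} : ((u : ℝ) : 𝕋) = v ↔ ∃ k : ℤ, v = u + k := by
  constructor
  · intro h
    have h2 : ((v - u : ℝ) : 𝕋) = 0 := by rw [AddCircle.coe_sub, h, sub_self]
    rw [AddCircle.coe_eq_zero_iff (1:ℝ)] at h2
    obtain ⟨k, hk⟩ := h2
    refine ⟨k, ?_⟩
    have : (k • (1:ℝ)) = (k:ℝ) := by simp
    linarith [hk ▸ this]
  · rintro ⟨k, rfl⟩
    have : ((k : ℝ) : 𝕋) = 0 := (AddCircle.coe_eq_zero_iff (1:ℝ)).mpr ⟨k, by simp⟩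
    rw [AddCircle.coe_add, this, add_zero]

lemma dbl_coe (u : ℝ) : dbl ((u : ℝ) : 𝕋) = ((2*u : ℝ) : 𝕋) := by
  rw [dbl, ← AddCircle.coe_add]; ring_nf

lemma fract_eq_of {x y : ℝ} (h0 : 0 ≤ y) (h1 : y < 1) (k : ℤ) (hk : x = y + k) :
    Int.fract x = y := by
  rw [Int.fract_eq_iff]
  exact ⟨h0, h1, k, by linarith⟩

lemma mem_img_Ioo {c u : ℝ} :
    ((u:ℝ):𝕋) ∈ (fun t : ℝ => ((c + t:ℝ):𝕋)) '' Set.Ioo 0 (1/2) ↔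
      Int.fract (u - c) ∈ Set.Ioo (0:ℝ) (1/2) := by
  constructor
  · rintro ⟨t, ht, heq⟩
    obtain ⟨k, hk⟩ := coe_eq_coe.mp heq
    have : Int.fract (u - c) = t := fract_eq_of ht.1.le (by linarith [ht.2]) k (by linarith)
    rw [this]; exact ht
  · intro h
    refine ⟨Int.fract (u - c), h, ?_⟩
    rw [coe_eq_coe]
    exact ⟨⌊u - c⌋, by rw [Int.fract]; ring⟩

lemma mem_openArcL_iff {α : 𝕋} {u : ℝ} :
    ((u:ℝ):𝕋) ∈ openArcL α ↔ Int.fract (u - rep α / 2) ∈ Set.Ioo (0:ℝ) (1/2) :=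
  mem_img_Ioo

lemma mem_openArcR_iff {α : 𝕋} {u : ℝ} :
    ((u:ℝ):𝕋) ∈ openArcR α ↔ Int.fract (u - (rep α / 2 + 1/2)) ∈ Set.Ioo (0:ℝ) (1/2) := by
  exact mem_img_Ioo

lemma rep_ne {α x : 𝕋} (hx : x ≠ α) : rep x ≠ rep α :=
  fun h => hx (by rw [← coe_rep x, ← coe_rep α, h])

lemma tldL_eq (α : 𝕋) (x : 𝕋) (hx : x ≠ α) :
    tldL α x = ((rep α/2 + Int.fract (rep x - rep α)/2 : ℝ) : 𝕋) := by
  obtain ⟨hA0, hA1⟩ := rep_mem α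
  obtain ⟨hR0, hR1⟩ := rep_mem x
  have hax : rep x ≠ rep α := rep_ne hx
  set a := rep α
  set r := rep x
  rw [tldL, mem_openArcL_iff]
  rcases lt_or_gt_of_ne hax with hlt | hgt
  · have h1 : Int.fract (r/2 - a/2) = (r-a)/2 + 1 :=
      fract_eq_of (by linarith) (by linarith) (-1) (by push_cast; ring)
    rw [if_neg (by rw [h1]; rintro ⟨h2, h3⟩; linarith)]
    have h2 : Int.fract (r - a) = r - a + 1 :=
      fract_eq_of (by linarith) (by linarith) (-1) (by push_cast; ring)
    rw [h2, coe_eq_coe]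
    exact ⟨0, by push_cast; ring⟩
  · have h1 : Int.fract (r/2 - a/2) = (r-a)/2 :=
      fract_eq_of (by linarith) (by linarith) 0 (by push_cast; ring)
    rw [if_pos (by rw [h1]; exact ⟨by linarith, by linarith⟩)]
    have h2 : Int.fract (r - a) = r - a :=
      fract_eq_of (by linarith) (by linarith) 0 (by push_cast; ring)
    rw [h2, coe_eq_coe]
    exact ⟨0, by push_cast; ring⟩

lemma tldR_eq (α : 𝕋) (x : 𝕋) (hx : x ≠ α) :
    tldR α x = ((rep α/2 + 1/2 + Int.fract (rep x - rep α)/2 : ℝ) : 𝕋) := by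
  obtain ⟨hA0, hA1⟩ := rep_mem α
  obtain ⟨hR0, hR1⟩ := rep_mem x
  have hax : rep x ≠ rep α := rep_ne hx
  set a := rep α
  set r := rep x
  rw [tldR, mem_openArcR_iff]
  rcases lt_or_gt_of_ne hax with hlt | hgt
  · have h1 : Int.fract (r/2 - (a/2 + 1/2)) = (r-a)/2 + 1/2 :=
      fract_eq_of (by linarith) (by linarith) (-1) (by push_cast; ring)
    rw [if_pos (by rw [h1]; exact ⟨by linarith, by linarith⟩)]
    have h2 : Int.fract (r - a) = r - a + 1 :=
      fract_eq_of (by linarith) (by linarith) (-1) (by push_cast; ring)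
    rw [h2, coe_eq_coe]
    exact ⟨1, by push_cast; ring⟩
  · have h1 : Int.fract (r/2 - (a/2 + 1/2)) = (r-a)/2 + 1/2 :=
      fract_eq_of (by linarith) (by linarith) (-1) (by push_cast; ring)
    rw [if_neg (by rw [h1]; rintro ⟨h2, h3⟩; linarith)]
    have h2 : Int.fract (r - a) = r - a :=
      fract_eq_of (by linarith) (by linarith) 0 (by push_cast; ring)
    rw [h2, coe_eq_coe]
    exact ⟨0, by push_cast; ring⟩
lemma fract_rep_pos {α x : 𝕋} (hx : x ≠ α) : 0 < Int.fract (rep x - rep α) := by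
  rcases lt_or_eq_of_le (Int.fract_nonneg (rep x - rep α)) with h | h
  · exact h
  · exfalso
    have h2 : rep x - rep α = ⌊rep x - rep α⌋ := by
      rw [Int.fract] at h; linarith
    obtain ⟨h1, h2'⟩ := rep_mem x; obtain ⟨h3, h4⟩ := rep_mem α
    have hb : (-1:ℝ) < (⌊rep x - rep α⌋:ℝ) := by rw [← h2]; linarith
    have hb2 : (⌊rep x - rep α⌋:ℝ) < 1 := by rw [← h2]; linarith
    have hbi : (-1:ℤ) < ⌊rep x - rep α⌋ := by exact_mod_cast hb
    have hbi2 : ⌊rep x - rep α⌋ < 1 := by exact_mod_cast hb2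
    have hz : ⌊rep x - rep α⌋ = 0 := by omega
    apply rep_ne hx
    rw [hz] at h2; push_cast at h2; linarith

lemma fract_rep_lt_one (x α : 𝕋) : Int.fract (rep x - rep α) < 1 := Int.fract_lt_one _

lemma dbl_tldL {α x : 𝕋} (hx : x ≠ α) : dbl (tldL α x) = x := by
  rw [tldL_eq α x hx, dbl_coe]
  conv_rhs => rw [← coe_rep x]
  rw [coe_eq_coe]
  exact ⟨⌊rep x - rep α⌋, by rw [Int.fract]; push_cast; ring⟩

lemma dbl_tldR {α x : 𝕋} (hx : x ≠ α) : dbl (tldR α x) = x := by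
  rw [tldR_eq α x hx, dbl_coe]
  conv_rhs => rw [← coe_rep x]
  rw [coe_eq_coe]
  exact ⟨⌊rep x - rep α⌋ - 1, by rw [Int.fract]; push_cast; ring⟩

lemma dbl_star1 (α : 𝕋) : dbl (star1 α) = α := by
  rw [star1, dbl_coe]
  conv_rhs => rw [← coe_rep α]
  rw [coe_eq_coe]
  exact ⟨0, by push_cast; ring⟩

lemma dbl_star2 (α : 𝕋) : dbl (star2 α) = α := by
  rw [star2, dbl_coe]
  conv_rhs => rw [← coe_rep α]
  rw [coe_eq_coe]
  exact ⟨-1, by push_cast; ring⟩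

lemma tldL_ne_star {α x : 𝕋} (hx : x ≠ α) :
    ¬ (tldL α x = star1 α ∨ tldL α x = star2 α) := by
  rintro (h | h) <;> [exact hx (by rw [← dbl_tldL hx, h, dbl_star1]);
    exact hx (by rw [← dbl_tldL hx, h, dbl_star2])]

lemma tldR_ne_star {α x : 𝕋} (hx : x ≠ α) :
    ¬ (tldR α x = star1 α ∨ tldR α x = star2 α) := by
  rintro (h | h) <;> [exact hx (by rw [← dbl_tldR hx, h, dbl_star1]);
    exact hx (by rw [← dbl_tldR hx, h, dbl_star2])]

lemma tldL_mem_openArcL {α x : 𝕋} (hx : x ≠ α) : tldL α x ∈ openArcL α := by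
  rw [tldL_eq α x hx, mem_openArcL_iff]
  have h1 := fract_rep_pos hx
  have h2 := fract_rep_lt_one x α
  have : Int.fract (rep α/2 + Int.fract (rep x - rep α)/2 - rep α/2)
      = Int.fract (rep x - rep α)/2 := fract_eq_of (by linarith) (by linarith) 0 (by push_cast; ring)
  rw [this]; exact ⟨by linarith, by linarith⟩

lemma tldR_notMem_openArcL {α x : 𝕋} (hx : x ≠ α) : tldR α x ∉ openArcL α := by
  rw [tldR_eq α x hx, mem_openArcL_iff]
  have h1 := fract_rep_pos hx
  have h2 := fract_rep_lt_one x α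
  have : Int.fract (rep α/2 + 1/2 + Int.fract (rep x - rep α)/2 - rep α/2)
      = 1/2 + Int.fract (rep x - rep α)/2 := fract_eq_of (by linarith) (by linarith) 0 (by push_cast; ring)
  rw [this]; rintro ⟨h3, h4⟩; linarith

lemma itin_tldL_zero {α x : 𝕋} (hx : x ≠ α) : itin α (tldL α x) 0 = Letter.L := by
  rw [itin, Function.iterate_zero_apply, if_neg (tldL_ne_star hx), if_pos (tldL_mem_openArcL hx)]

lemma itin_tldR_zero {α x : 𝕋} (hx : x ≠ α) : itin α (tldR α x) 0 = Letter.R := by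
  rw [itin, Function.iterate_zero_apply, if_neg (tldR_ne_star hx), if_neg (tldR_notMem_openArcL hx)]

lemma itin_tldL_succ {α x : 𝕋} (hx : x ≠ α) (n : ℕ) :
    itin α (tldL α x) (n+1) = itin α x n := by
  have h : dbl^[n+1] (tldL α x) = dbl^[n] x := by
    rw [Function.iterate_succ_apply, dbl_tldL hx]
  rw [itin, itin, h]

lemma itin_tldR_succ {α x : 𝕋} (hx : x ≠ α) (n : ℕ) :
    itin α (tldR α x) (n+1) = itin α x n := by
  have h : dbl^[n+1] (tldR α x) = dbl^[n] x := by
    rw [Function.iterate_succ_apply, dbl_tldR hx]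
  rw [itin, itin, h]

lemma approx_tldL {α x y : 𝕋} (hx : x ≠ α) (hy : y ≠ α) (h : approx α x y) :
    approx α (tldL α x) (tldL α y) := by
  intro n
  cases n with
  | zero => left; rw [itin_tldL_zero hx, itin_tldL_zero hy]
  | succ m => rw [itin_tldL_succ hx, itin_tldL_succ hy]; exact h m

lemma approx_tldR {α x y : 𝕋} (hx : x ≠ α) (hy : y ≠ α) (h : approx α x y) :
    approx α (tldR α x) (tldR α y) := by
  intro n
  cases n with
  | zero => left; rw [itin_tldR_zero hx, itin_tldR_zero hy]
  | succ m => rw [itin_tldR_succ hx, itin_tldR_succ hy]; exact h m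

lemma tldR_eq_tldL_add {α x : 𝕋} (hx : x ≠ α) : tldR α x = tldL α x + ((1/2 : ℝ) : 𝕋) := by
  rw [tldR_eq α x hx, tldL_eq α x hx, ← AddCircle.coe_add, coe_eq_coe]
  exact ⟨0, by push_cast; ring⟩

lemma dbl_inj_cases {z w : 𝕋} (h : dbl z = dbl w) : z = w ∨ z = w + ((1/2:ℝ) : 𝕋) := by
  have hz := coe_rep z
  have hw := coe_rep w
  rw [← hz, ← hw, dbl_coe, dbl_coe] at h
  obtain ⟨k, hk⟩ := coe_eq_coe.mp h
  obtain ⟨h1, h2⟩ := rep_mem z; obtain ⟨h3, h4⟩ := rep_mem w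
  have hk1 : (-2:ℝ) < k := by linarith
  have hk2 : (k:ℝ) < 2 := by linarith
  have hk1' : (-2:ℤ) < k := by exact_mod_cast hk1
  have hk2' : k < 2 := by exact_mod_cast hk2
  have : k = -1 ∨ k = 0 ∨ k = 1 := by omega
  rcases this with rfl | rfl | rfl
  · right
    rw [← hz, ← hw, ← AddCircle.coe_add, coe_eq_coe]
    refine ⟨0, ?_⟩
    push_cast at hk ⊢; linarith
  · left
    rw [← hz, ← hw, coe_eq_coe]
    refine ⟨0, ?_⟩
    push_cast at hk ⊢; linarith
  · right
    rw [← hz, ← hw, ← AddCircle.coe_add, coe_eq_coe]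
    refine ⟨1, ?_⟩
    push_cast at hk ⊢; linarith

lemma half_add_half : ((1/2:ℝ):𝕋) + ((1/2:ℝ):𝕋) = 0 := by
  rw [← AddCircle.coe_add]
  exact (AddCircle.coe_eq_zero_iff (1:ℝ)).mpr ⟨1, by norm_num⟩

lemma preimage_eq {α : 𝕋} {D : Set 𝕋} (hαD : α ∉ D) :
    dbl ⁻¹' D = tldL α '' D ∪ tldR α '' D := by
  ext z
  constructor
  · intro hz
    have hx : dbl z ≠ α := fun h => hαD (h ▸ hz)
    have h1 : dbl (tldL α (dbl z)) = dbl z := dbl_tldL hx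
    rcases dbl_inj_cases h1 with h2 | h2
    · exact Or.inl ⟨dbl z, hz, h2⟩
    · right
      refine ⟨dbl z, hz, ?_⟩
      rw [tldR_eq_tldL_add hx, h2, add_assoc, half_add_half, add_zero]
  · rintro (⟨x, hxD, rfl⟩ | ⟨x, hxD, rfl⟩)
    · have hx : x ≠ α := fun h => hαD (h ▸ hxD)
      simpa [Set.mem_preimage, dbl_tldL hx] using hxD
    · have hx : x ≠ α := fun h => hαD (h ▸ hxD)
      simpa [Set.mem_preimage, dbl_tldR hx] using hxD

lemma openArcL_disj_openArcR (α : 𝕋) : openArcL α ∩ openArcR α = ∅ := by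
  ext x
  simp only [Set.mem_inter_iff, Set.mem_empty_iff_false, iff_false]
  rintro ⟨⟨t, ht, rfl⟩, hR⟩
  rw [mem_openArcR_iff] at hR
  have : Int.fract (rep α/2 + t - (rep α/2 + 1/2)) = t + 1/2 :=
    fract_eq_of (by linarith [ht.1]) (by linarith [ht.2]) (-1) (by push_cast; ring)
  rw [this] at hR
  obtain ⟨h1, h2⟩ := hR
  linarith [ht.1]
lemma coe_Icc_disjoint {c1 d1 c2 d2 : ℝ} (h : d1 < c2) (h2 : d2 < c1 + 1) :
    Disjoint ((fun u:ℝ => ((u:ℝ):𝕋)) '' Set.Icc c1 d1) ((fun u:ℝ => ((u:ℝ):𝕋)) '' Set.Icc c2 d2) := by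
  rw [Set.disjoint_left]
  rintro z ⟨u, hu, rfl⟩ ⟨v, hv, heq⟩
  obtain ⟨k, hk⟩ := coe_eq_coe.mp heq
  have h1 : u < v := by linarith [hu.2, hv.1]
  have h3 : v < u + 1 := by linarith [hv.2, hu.1]
  have hk1 : (-1:ℝ) < k := by linarith
  have hk2 : (k:ℝ) < 0 := by linarith
  have h4 : (-1:ℤ) < k := by exact_mod_cast hk1
  have h5 : k < 0 := by exact_mod_cast hk2
  omega

lemma coe_Icc_measurable (c d : ℝ) :
    MeasurableSet ((fun u:ℝ => ((u:ℝ):𝕋)) '' Set.Icc c d) :=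
  (isCompact_Icc.image (AddCircle.continuous_mk' 1)).isClosed.measurableSet

lemma vol_arc {c d : ℝ} (h1 : c ≤ d) (h2 : d - c < 1) :
    volume ((fun u:ℝ => ((u:ℝ):𝕋)) '' Set.Icc c d) = ENNReal.ofReal (d - c) := by
  rw [AddCircle.add_projection_respects_measure (T := 1) c (coe_Icc_measurable c d)]
  have hset : QuotientAddGroup.mk ⁻¹' ((fun u:ℝ => ((u:ℝ):𝕋)) '' Set.Icc c d) ∩ Set.Ioc c (c + 1)
      = Set.Ioc c d ∪ {c + 1} := by
    ext u
    simp only [Set.mem_inter_iff, Set.mem_preimage, Set.mem_union, Set.mem_Ioc,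
      Set.mem_singleton_iff]
    constructor
    · rintro ⟨⟨v, hv, heq⟩, hu⟩
      obtain ⟨k, hk⟩ := coe_eq_coe.mp heq
      have hk1 : (-1:ℝ) < k := by linarith [hv.2, hu.1]
      have hk2 : (k:ℝ) < 2 := by linarith [hv.1, hu.2]
      have hk1' : (-1:ℤ) < k := by exact_mod_cast hk1
      have hk2' : k < 2 := by exact_mod_cast hk2
      have : k = 0 ∨ k = 1 := by omega
      rcases this with rfl | rfl
      · left; push_cast at hk; exact ⟨hu.1, by linarith [hv.2]⟩
      · right; push_cast at hk; have := hv.1; have := hu.2; linarith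
    · rintro (hu | rfl)
      · exact ⟨⟨u, ⟨hu.1.le, hu.2⟩, rfl⟩, hu.1, by linarith [hu.2]⟩
      · refine ⟨⟨c, ⟨le_refl c, h1⟩, ?_⟩, by linarith, le_refl _⟩
        show ((c:ℝ):𝕋) = ((c+1:ℝ):𝕋)
        exact (coe_eq_coe.mpr ⟨-1, by push_cast; ring⟩ : ((c+1:ℝ):𝕋) = ((c:ℝ):𝕋)).symm
  rw [hset]
  have hd : Disjoint (Set.Ioc c d) ({c + 1} : Set ℝ) := by
    rw [Set.disjoint_left]
    rintro u hu rfl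
    linarith [hu.2]
  rw [measure_union hd (measurableSet_singleton _), Real.volume_Ioc, Real.volume_singleton,
    add_zero]

lemma mod_shift (n q i : ℕ) : ((i + 1) % n + q) % n = ((i + q) % n + 1) % n := by
  rw [Nat.mod_add_mod, Nat.mod_add_mod]
  ring_nf

lemma rot_surj {n q j : ℕ} (hn : 0 < n) (hj : j < n) :
    ∃ i < n, (i + q) % n = j := by
  refine ⟨(j + (n - q % n)) % n, Nat.mod_lt _ hn, ?_⟩
  rw [Nat.mod_add_mod]
  have hr : q % n < n := Nat.mod_lt _ hn
  have hd : n * (q / n) + q % n = q := Nat.div_add_mod q n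
  set m := n * (q / n) with hm
  have key : j + (n - q % n) + q = j + n * (1 + q / n) := by
    have : n * (1 + q / n) = n + m := by rw [hm]; ring
    omega
  rw [key, Nat.add_mul_mod_self_left, Nat.mod_eq_of_lt hj]

lemma biUnion_rot {n q : ℕ} (hn : 0 < n) (A : ℕ → Set 𝕋) :
    ⋃ i ∈ Finset.range n, A ((i + q) % n) = ⋃ i ∈ Finset.range n, A i := by
  apply Set.Subset.antisymm
  · refine Set.iUnion₂_subset fun i hi => ?_
    exact Set.subset_biUnion_of_mem (Finset.mem_range.mpr (Nat.mod_lt _ hn))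
  · refine Set.iUnion₂_subset fun j hj => ?_
    obtain ⟨i, hi, hij⟩ := rot_surj (q := q) hn (Finset.mem_range.mp hj)
    intro x hx
    exact Set.mem_biUnion (Finset.mem_range.mpr hi) (by rw [hij]; exact hx)

lemma mod_two_cases {n m : ℕ} (h : m < 2 * n) : m % n = if m < n then m else m - n := by
  split
  · exact Nat.mod_eq_of_lt (by omega)
  · rw [Nat.mod_eq_sub_mod (by omega), Nat.mod_eq_of_lt (by omega)]
lemma tldL_coe (α : 𝕋) (u : ℝ) (hu : ((u:ℝ):𝕋) ≠ α) :
    tldL α ((u:ℝ):𝕋) = ((rep α/2 + 0 + Int.fract (u - rep α)/2 : ℝ) : 𝕋) := by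
  rw [tldL_eq α _ hu, rep_coe]
  have h0 : Int.fract u - rep α = (u - rep α) - ⌊u⌋ := by rw [Int.fract]; ring
  have : Int.fract (Int.fract u - rep α) = Int.fract (u - rep α) := by
    rw [h0, Int.fract_sub_intCast]
  rw [this, add_zero]

lemma tldR_coe (α : 𝕋) (u : ℝ) (hu : ((u:ℝ):𝕋) ≠ α) :
    tldR α ((u:ℝ):𝕋) = ((rep α/2 + 1/2 + Int.fract (u - rep α)/2 : ℝ) : 𝕋) := by
  rw [tldR_eq α _ hu, rep_coe]
  have h0 : Int.fract u - rep α = (u - rep α) - ⌊u⌋ := by rw [Int.fract]; ring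
  have : Int.fract (Int.fract u - rep α) = Int.fract (u - rep α) := by
    rw [h0, Int.fract_sub_intCast]
  rw [this]

lemma master (α : 𝕋) (c : ℝ) (hc : 0 ≤ c) (hc2 : c ≤ 1/2) (F : 𝕋 → 𝕋)
    (hF : ∀ u : ℝ, ((u:ℝ):𝕋) ≠ α →
      F ((u:ℝ):𝕋) = ((rep α/2 + c + Int.fract (u - rep α)/2 : ℝ) : 𝕋))
    (hFa : ∀ x y : 𝕋, x ≠ α → y ≠ α → approx α x y → approx α (F x) (F y))
    (n : ℕ) (D : Set 𝕋) (hD : IsGluingLink α n D) (hαD : α ∉ D) :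
    IsGluingLink α n (F '' D) ∧ volume (F '' D) = volume D / 2 := by
  obtain ⟨hn, s, e, hse, hes, hwrap, hDeq, hglue⟩ := hD
  -- points of arcs are in D, hence ≠ α
  have harcD : ∀ i, i < n → ∀ u ∈ Set.Icc (s i) (e i), ((u:ℝ):𝕋) ∈ D := by
    intro i hi u hu
    rw [hDeq]
    exact Set.mem_biUnion (Finset.mem_range.mpr hi) ⟨u, hu, rfl⟩
  have hne : ∀ i, i < n → ∀ u ∈ Set.Icc (s i) (e i), ((u:ℝ):𝕋) ≠ α :=
    fun i hi u hu h => hαD (h ▸ harcD i hi u hu)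
  have noInt : ∀ i, i < n → ∀ u ∈ Set.Icc (s i) (e i), ∀ k : ℤ, u ≠ rep α + k := by
    intro i hi u hu k hk
    apply hne i hi u hu
    have h2 : ((rep α + k : ℝ) : 𝕋) = ((rep α : ℝ):𝕋) := coe_eq_coe.mpr ⟨-k, by push_cast; ring⟩
    rw [hk, h2, coe_rep]
  -- fract is affine on each arc
  have key : ∀ i, i < n → ∀ u ∈ Set.Icc (s i) (e i),
      Int.fract (u - rep α) = Int.fract (s i - rep α) + (u - s i) := by
    intro i hi u hu
    have hm : ⌊u - rep α⌋ = ⌊s i - rep α⌋ := by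
      have h1 : ⌊s i - rep α⌋ ≤ ⌊u - rep α⌋ := Int.floor_le_floor (by linarith [hu.1])
      rcases lt_or_eq_of_le h1 with h2 | h2
      · exfalso
        have hm1 : (⌊u - rep α⌋:ℝ) ≤ u - rep α := Int.floor_le _
        have hm3 : (⌊s i - rep α⌋:ℝ) + 1 ≤ (⌊u - rep α⌋:ℝ) := by exact_mod_cast h2
        have hm2 : (s i - rep α) < ⌊u - rep α⌋ := by
          linarith [Int.lt_floor_add_one (s i - rep α)]
        exact noInt i hi (rep α + ⌊u - rep α⌋) ⟨by linarith, by linarith [hu.2]⟩ _ rfl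
      · exact h2.symm
    rw [Int.fract, Int.fract, hm]; ring
  have fpos : ∀ i, i < n → ∀ u ∈ Set.Icc (s i) (e i), 0 < Int.fract (u - rep α) := by
    intro i hi u hu
    rcases lt_or_eq_of_le (Int.fract_nonneg (u - rep α)) with h | h
    · exact h
    · exfalso
      apply noInt i hi u hu ⌊u - rep α⌋
      rw [Int.fract] at h
      linarith
  set tS : ℕ → ℝ := fun i => Int.fract (s i - rep α) with htS
  set tE : ℕ → ℝ := fun i => Int.fract (e i - rep α) with htE
  have hmemS : ∀ i, i < n → s i ∈ Set.Icc (s i) (e i) := fun i hi => ⟨le_refl _, hse i hi⟩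
  have hmemE : ∀ i, i < n → e i ∈ Set.Icc (s i) (e i) := fun i hi => ⟨hse i hi, le_refl _⟩
  have hTs0 : ∀ i, i < n → 0 < tS i := fun i hi => fpos i hi (s i) (hmemS i hi)
  have hTe0 : ∀ i, i < n → 0 < tE i := fun i hi => fpos i hi (e i) (hmemE i hi)
  have hTs1 : ∀ i, tS i < 1 := fun i => Int.fract_lt_one _
  have hTe1 : ∀ i, tE i < 1 := fun i => Int.fract_lt_one _
  have hdiff : ∀ i, i < n → tE i = tS i + (e i - s i) := fun i hi => key i hi (e i) (hmemE i hi)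
  -- image of each arc
  have himg : ∀ i, i < n →
      F '' ((fun u:ℝ => ((u:ℝ):𝕋)) '' Set.Icc (s i) (e i)) =
        (fun u:ℝ => ((u:ℝ):𝕋)) '' Set.Icc (rep α/2 + c + tS i/2) (rep α/2 + c + tE i/2) := by
    intro i hi
    ext z
    constructor
    · rintro ⟨w, ⟨u, hu, rfl⟩, rfl⟩
      rw [hF u (hne i hi u hu)]
      refine ⟨rep α/2 + c + Int.fract (u - rep α)/2, ?_, rfl⟩
      rw [key i hi u hu]
      constructor
      · have := hu.1; simp only [htS]; nlinarith [hu.1]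
      · have h1 := hdiff i hi; have := hu.2; simp only [htE]
        have : Int.fract (s i - rep α) + (u - s i) ≤ Int.fract (e i - rep α) := by
          rw [show Int.fract (e i - rep α) = tE i from rfl, hdiff i hi]
          simp only [htS]; linarith [hu.2]
        linarith
    · rintro ⟨v, hv, rfl⟩
      set u := s i + (2*(v - rep α/2 - c) - tS i) with hudef
      have hu : u ∈ Set.Icc (s i) (e i) := by
        constructor
        · have := hv.1; rw [hudef]; linarith
        · have := hv.2; have h1 := hdiff i hi; rw [hudef]; linarith
      refine ⟨((u:ℝ):𝕋), ⟨u, hu, rfl⟩, ?_⟩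
      rw [hF u (hne i hi u hu), key i hi u hu]
      have : rep α/2 + c + (tS i + (u - s i))/2 = v := by rw [hudef]; ring
      simp only [htS] at this
      rw [this]
  have hFD : F '' D = ⋃ i ∈ Finset.range n,
      (fun u:ℝ => ((u:ℝ):𝕋)) '' Set.Icc (rep α/2 + c + tS i/2) (rep α/2 + c + tE i/2) := by
    rw [hDeq, Set.image_iUnion₂]
    exact Set.iUnion₂_congr fun i hi => himg i (Finset.mem_range.mp hi)
  -- the special point a' and the rotation index q
  obtain ⟨hA0, hA1⟩ := rep_mem α
  set a' : ℝ := rep α + ⌈s 0 - rep α⌉ with ha'def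
  have hsmono : ∀ i j, i < j → j < n → s i ≤ s j := fun i j hij hj =>
    le_of_lt (lt_of_le_of_lt (hse i (lt_trans hij hj)) (hes i j hij hj))
  have ha'1 : s 0 < a' := by
    rcases lt_or_eq_of_le (Int.le_ceil (s 0 - rep α)) with h | h
    · rw [ha'def]; linarith
    · exfalso; exact noInt 0 hn (s 0) (hmemS 0 hn) ⌈s 0 - rep α⌉ (by linarith)
  have ha'2 : a' < s 0 + 1 := by
    rw [ha'def]; linarith [Int.ceil_lt_add_one (s 0 - rep α)]
  have hwin : ∀ p, p < n → s 0 ≤ s p ∧ e p < s 0 + 1 := by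
    intro p hp
    constructor
    · rcases Nat.eq_zero_or_pos p with rfl | hp0
      · exact le_refl _
      · exact hsmono 0 p hp0 hp
    · exact hwrap 0 hn p hp
  have hside : ∀ p, p < n → e p < a' ∨ a' < s p := by
    intro p hp
    rcases lt_trichotomy (e p) a' with h | h | h
    · exact Or.inl h
    · exfalso
      refine noInt p hp (e p) (hmemE p hp) ⌈s 0 - rep α⌉ ?_
      rw [ha'def] at h
      exact h
    · right
      rcases lt_trichotomy (s p) a' with h2 | h2 | h2
      · exfalso
        exact noInt p hp a' ⟨le_of_lt h2, le_of_lt h⟩ ⌈s 0 - rep α⌉ rfl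
      · exfalso
        exact noInt p hp (s p) (hmemS p hp) ⌈s 0 - rep α⌉ (by rw [h2])
      · exact h2
  -- fract at points of the window
  have hfrL : ∀ p, p < n → ∀ u ∈ Set.Icc (s p) (e p), u < a' → Int.fract (u - rep α) = u - a' + 1 := by
    intro p hp u hu hlt
    have hw := hwin p hp
    have h1 : s 0 ≤ u := le_trans hw.1 hu.1
    refine fract_eq_of (by linarith) (by linarith) (⌈s 0 - rep α⌉ - 1) ?_
    rw [ha'def]; push_cast; ring
  have hfrR : ∀ p, p < n → ∀ u ∈ Set.Icc (s p) (e p), a' < u → Int.fract (u - rep α) = u - a' := by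
    intro p hp u hu hlt
    have hw := hwin p hp
    have h2 : u < s 0 + 1 := lt_of_le_of_lt hu.2 hw.2
    exact fract_eq_of (by linarith) (by linarith) ⌈s 0 - rep α⌉ (by rw [ha'def]; push_cast; ring)
  -- rotation index
  set q : ℕ := if h : ∃ p, p < n ∧ a' < s p then Nat.find h else n with hqdef
  have P2 : ∀ p, p < n → q ≤ p → a' < s p := by
    intro p hp hqp
    have hex : ∃ p, p < n ∧ a' < s p := by
      by_contra hcon
      rw [hqdef, dif_neg hcon] at hqp
      omega
    rw [hqdef, dif_pos hex] at hqp
    obtain ⟨h1, h2⟩ := Nat.find_spec hex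
    rcases lt_or_eq_of_le hqp with h3 | h3
    · exact lt_of_lt_of_le h2 (hsmono _ p h3 hp)
    · rw [← h3]; exact h2
  have P1 : ∀ p, p < n → p < q → e p < a' := by
    intro p hp hpq
    rcases hside p hp with h | h
    · exact h
    · exfalso
      have hex : ∃ p, p < n ∧ a' < s p := ⟨p, hp, h⟩
      rw [hqdef, dif_pos hex] at hpq
      exact absurd ⟨hp, h⟩ (Nat.find_min hex hpq)
  -- endpoint formulas
  have htSlt : ∀ p, p < n → p < q → tS p = s p - a' + 1 :=
    fun p hp hpq => hfrL p hp (s p) (hmemS p hp) (by linarith [P1 p hp hpq, hse p hp])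
  have htElt : ∀ p, p < n → p < q → tE p = e p - a' + 1 :=
    fun p hp hpq => hfrL p hp (e p) (hmemE p hp) (P1 p hp hpq)
  have htSge : ∀ p, p < n → q ≤ p → tS p = s p - a' :=
    fun p hp hpq => hfrR p hp (s p) (hmemS p hp) (P2 p hp hpq)
  have htEge : ∀ p, p < n → q ≤ p → tE p = e p - a' :=
    fun p hp hpq => hfrR p hp (e p) (hmemE p hp) (by linarith [P2 p hp hpq, hse p hp])
  -- separation of t-intervals
  have sep : ∀ i, i < n → ∀ j, j < n → i < j → tE i < tS j ∨ tE j < tS i := by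
    intro i hi j hj hij
    rcases Nat.lt_or_ge i q with hiq | hiq
    · rcases Nat.lt_or_ge j q with hjq | hjq
      · left; rw [htElt i hi hiq, htSlt j hj hjq]; linarith [hes i j hij hj]
      · right; rw [htEge j hj hjq, htSlt i hi hiq]; linarith [hwrap i hi j hj]
    · rcases Nat.lt_or_ge j q with hjq | hjq
      · omega
      · left; rw [htEge i hi hiq, htSge j hj hjq]; linarith [hes i j hij hj]
  -- measure computation
  have harc_meas : ∀ (c' d' : ℝ), MeasurableSet ((fun u:ℝ => ((u:ℝ):𝕋)) '' Set.Icc c' d') :=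
    coe_Icc_measurable
  have hlen : ∀ i, i < n → e i - s i < 1 := fun i hi => by linarith [hwrap i hi i hi]
  have hvolD : volume D = ∑ i ∈ Finset.range n, ENNReal.ofReal (e i - s i) := by
    rw [hDeq, measure_biUnion_finset ?disj (fun i _ => harc_meas _ _)]
    · exact Finset.sum_congr rfl fun i hi =>
        vol_arc (hse i (Finset.mem_range.mp hi)) (hlen i (Finset.mem_range.mp hi))
    case disj =>
      intro i hi j hj hij
      simp only [Finset.coe_sort_coe, Finset.mem_coe, Finset.mem_range] at hi hj
      rcases Nat.lt_or_ge i j with h | h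
      · exact coe_Icc_disjoint (hes i j h hj) (hwrap i hi j hj)
      · exact (coe_Icc_disjoint (hes j i (by omega) hi) (hwrap j hj i hi)).symm
  have hvolF : volume (F '' D) = ∑ i ∈ Finset.range n, ENNReal.ofReal ((e i - s i)/2) := by
    rw [hFD, measure_biUnion_finset ?disj2 (fun i _ => harc_meas _ _)]
    · refine Finset.sum_congr rfl fun i hi => ?_
      have hi' := Finset.mem_range.mp hi
      have h1 : rep α/2 + c + tS i/2 ≤ rep α/2 + c + tE i/2 := by
        have := hdiff i hi'; have := hse i hi'; linarith
      have h2 : (rep α/2 + c + tE i/2) - (rep α/2 + c + tS i/2) < 1 := by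
        have := hTs0 i hi'; have := hTe1 i; linarith
      rw [vol_arc h1 h2]
      congr 1
      have := hdiff i hi'; linarith
    case disj2 =>
      intro i hi j hj hij
      simp only [Finset.coe_sort_coe, Finset.mem_coe, Finset.mem_range] at hi hj
      have hbound : ∀ p, p < n → rep α/2 + c + tE p/2 < (rep α/2 + c + tS p/2) + 1 := by
        intro p hp; have := hTs0 p hp; have := hTe1 p; linarith
      rcases Nat.lt_or_ge i j with h | h
      · rcases sep i hi j hj h with hs' | hs'
        · exact coe_Icc_disjoint (by linarith) (by linarith [hbound i hi, hTe1 j, hTs0 i hi])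
        · exact (coe_Icc_disjoint (by linarith) (by linarith [hbound j hj, hTe1 i, hTs0 j hj])).symm
      · rcases sep j hj i hi (by omega) with hs' | hs'
        · exact (coe_Icc_disjoint (by linarith) (by linarith [hTe1 i, hTs0 j hj])).symm
        · exact coe_Icc_disjoint (by linarith) (by linarith [hTe1 j, hTs0 i hi])
  have hvol : volume (F '' D) = volume D / 2 := by
    rw [hvolF, hvolD]
    have : ∀ x : ℝ, ENNReal.ofReal (x/2) = ENNReal.ofReal x / 2 := by
      intro x
      rw [ENNReal.ofReal_div_of_pos (by norm_num)]
      norm_num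
    simp_rw [this, ENNReal.div_eq_inv_mul]
    rw [Finset.mul_sum]
  refine ⟨⟨hn, fun i => rep α/2 + c + tS ((i + q) % n)/2, fun i => rep α/2 + c + tE ((i + q) % n)/2,
      ?_, ?_, ?_, ?_, ?_⟩, hvol⟩
  · intro i hi
    have hi' : (i + q) % n < n := Nat.mod_lt _ hn
    have := hdiff _ hi'; have := hse _ hi'; linarith
  · -- ordering
    intro i j hij hj
    have hi : i < n := lt_trans hij hj
    have hq_le : q ≤ n := by
      rw [hqdef]
      split
      · next h => exact le_of_lt (Nat.find_spec h).1
      · exact le_refl n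
    beta_reduce
    have hi2 : i + q < 2*n := by omega
    have hj2 : j + q < 2*n := by omega
    rw [mod_two_cases hi2, mod_two_cases hj2]
    by_cases h1 : i + q < n
    · by_cases h2 : j + q < n
      · rw [if_pos h1, if_pos h2]
        rw [htEge _ h1 (Nat.le_add_left _ _), htSge _ h2 (Nat.le_add_left _ _)]
        linarith [hes (i+q) (j+q) (by omega) h2]
      · rw [if_pos h1, if_neg h2]
        have hj' : j + q - n < n := by omega
        rw [htEge _ h1 (Nat.le_add_left _ _), htSlt _ hj' (by omega)]
        linarith [hwrap (j+q-n) hj' (i+q) h1]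
    · have h2 : ¬ (j + q < n) := by omega
      rw [if_neg h1, if_neg h2]
      have hi' : i + q - n < n := by omega
      have hj' : j + q - n < n := by omega
      rw [htElt _ hi' (by omega), htSlt _ hj' (by omega)]
      linarith [hes (i+q-n) (j+q-n) (by omega) hj']
  · intro i hi j hj
    have hi' : (i + q) % n < n := Nat.mod_lt _ hn
    have hj' : (j + q) % n < n := Nat.mod_lt _ hn
    have := hTe1 ((j + q) % n); have := hTs0 _ hi'
    linarith
  · rw [hFD]
    exact (biUnion_rot (q := q) hn
      (fun p => (fun u:ℝ => ((u:ℝ):𝕋)) '' Set.Icc (rep α/2 + c + tS p/2) (rep α/2 + c + tE p/2))).symm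
  · intro i hi
    have hi' : (i + q) % n < n := Nat.mod_lt _ hn
    have hmod : ((i + 1) % n + q) % n = ((i + q) % n + 1) % n := mod_shift n q i
    beta_reduce
    rw [hmod]
    have hj' : ((i + q) % n + 1) % n < n := Nat.mod_lt _ hn
    have he1 : ((rep α/2 + c + tE ((i + q) % n)/2 : ℝ):𝕋) = F ((e ((i + q) % n) : ℝ):𝕋) := by
      rw [hF (e _) (hne _ hi' _ (hmemE _ hi'))]
    have hs1 : ((rep α/2 + c + tS (((i + q) % n + 1) % n)/2 : ℝ):𝕋)
        = F ((s (((i + q) % n + 1) % n) : ℝ):𝕋) := by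
      rw [hF (s _) (hne _ hj' _ (hmemS _ hj'))]
    rw [he1, hs1]
    exact hFa _ _ (hne _ hi' _ (hmemE _ hi')) (hne _ hj' _ (hmemS _ hj'))
      (hglue ((i + q) % n) hi')
/-- if `α` is not periodic and `D` is a gluing link with `n` arcs not containing
`α`, then `h⁻¹(D)` is the disjoint union of `L̃(D)` and `R̃(D)`, each of which is a gluing link
with `n` arcs of Haar measure `|D|/2`. -/
theorem stmt_5 (α : 𝕋) (hα : ¬ Periodic' α) (n : ℕ) (D : Set 𝕋)
    (hD : IsGluingLink α n D) (hαD : α ∉ D) :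
    dbl ⁻¹' D = tldL α '' D ∪ tldR α '' D ∧
    Disjoint (tldL α '' D) (tldR α '' D) ∧
    IsGluingLink α n (tldL α '' D) ∧ IsGluingLink α n (tldR α '' D) ∧
    volume (tldL α '' D) = volume D / 2 ∧ volume (tldR α '' D) = volume D / 2 := by
  have hL := master α 0 le_rfl (by norm_num) (tldL α) (fun u hu => tldL_coe α u hu)
    (fun x y hx hy h => approx_tldL hx hy h) n D hD hαD
  have hR := master α (1/2) (by norm_num) le_rfl (tldR α) (fun u hu => tldR_coe α u hu)
    (fun x y hx hy h => approx_tldR hx hy h) n D hD hαD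
  refine ⟨preimage_eq hαD, ?_, hL.1, hR.1, hL.2, hR.2⟩
  rw [Set.disjoint_left]
  rintro z ⟨x, hx, rfl⟩ ⟨y, hy, heq⟩
  have hxa : x ≠ α := fun h => hαD (h ▸ hx)
  have hya : y ≠ α := fun h => hαD (h ▸ hy)
  have h1 : tldL α x ∈ openArcL α := tldL_mem_openArcL hxa
  rw [← heq] at h1
  exact tldR_notMem_openArcL hya h1
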